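/- Let α, β, γ be regular languages with ε ∉ α and ε ∉ β. Any language L satisfying L = α·L + L·β + γ and minimal among such solutions is regular. -/

import Mathlib

/-!
The least solution of `z = a z + z b + c` in any Kleene algebra is `a∗ c b∗` (Marciani's rule):
`a∗ c b∗` is a solution by unfolding both stars once, and it lies below every pre-fixed point
by the induction axioms of the stars. So a minimal solution `L` equals `α∗ γ β∗`, which is
regular because regular languages are closed under concatenation and Kleene star. Both closure
properties are proved via Myhill–Nerode: every left quotient of `l * m` or `l∗` is determined by
finitely many data built from left quotients of `l` and `m`.
-/

open Set
open scoped Computability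

section KleeneAlgebra

variable {K : Type*} [KleeneAlgebra K]

theorem kstar_mul_mul_kstar_le {a b c z : K} (h : a * z + z * b + c ≤ z) : a∗ * c * b∗ ≤ z := by
  obtain ⟨⟨haz, hzb⟩, hcz⟩ := by simpa only [add_le_iff] using h
  rw [mul_assoc]
  exact kstar_mul_le (mul_kstar_le hcz hzb) haz

theorem kstar_mul_mul_kstar_eq (a b c : K) :
    a∗ * c * b∗ = a * (a∗ * c * b∗) + a∗ * c * b∗ * b + c := by
  refine le_antisymm ?_ (add_le_iff.2 ⟨add_le_iff.2 ⟨?_, ?_⟩, ?_⟩)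
  · have unfold_a : a∗ * c * b∗ = a * (a∗ * c * b∗) + c * b∗ := by
      conv_lhs => rw [← one_add_mul_kstar (a := a)]
      simp only [add_mul, one_mul, mul_assoc, add_comm]
    have unfold_b : c * b∗ = c * b∗ * b + c := by
      conv_lhs => rw [← one_add_kstar_mul (a := b)]
      simp only [mul_add, mul_one, mul_assoc, add_comm]
    calc a∗ * c * b∗ = a * (a∗ * c * b∗) + c * b∗ * b + c := by
          rw [add_assoc, ← unfold_b, ← unfold_a]
      _ ≤ a * (a∗ * c * b∗) + a∗ * c * b∗ * b + c := by
          gcongr; exact le_mul_of_one_le_left' one_le_kstar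
  · simpa only [mul_assoc] using mul_le_mul_left (mul_kstar_le_kstar (a := a)) (c * b∗)
  · simpa only [mul_assoc] using mul_le_mul_right (kstar_mul_le_kstar (a := b)) (a∗ * c)
  · calc c = 1 * c * 1 := by rw [one_mul, mul_one]
      _ ≤ a∗ * c * b∗ := by gcongr <;> exact one_le_kstar

theorem eq_kstar_mul_mul_kstar_of_minimal {a b c x : K} (hx : x = a * x + x * b + c)
    (hmin : ∀ z, z = a * z + z * b + c → x ≤ z) : x = a∗ * c * b∗ :=
  le_antisymm (hmin _ (kstar_mul_mul_kstar_eq a b c)) (kstar_mul_mul_kstar_le hx.ge)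

end KleeneAlgebra

namespace Language

variable {α : Type*}

theorem IsRegular.of_leftQuotient_eq_comp {L : Language α} {ι : Type*} (f : List α → ι)
    (g : ι → Language α) (hf : (range f).Finite) (h : ∀ x, L.leftQuotient x = g (f x)) :
    L.IsRegular :=
  .of_finite_range_leftQuotient <| (hf.image g).subset <| by
    rintro _ ⟨x, rfl⟩
    exact ⟨f x, mem_range_self x, (h x).symm⟩

def suffixesAfter (l : Language α) (x : List α) : Set (List α) := {v | ∃ u ∈ l, u ++ v = x}

theorem leftQuotient_mul (l m : Language α) (x : List α) :
    (l * m).leftQuotient x = l.leftQuotient x * m + ⨆ v ∈ l.suffixesAfter x, m.leftQuotient v := by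
  ext y
  simp only [mem_leftQuotient, mem_add, mem_mul, mem_iSup, suffixesAfter, mem_ofPred_eq]
  constructor
  · rintro ⟨u, hu, w, hw, huw⟩
    rcases List.append_eq_append_iff.1 huw with ⟨v, rfl, rfl⟩ | ⟨c, rfl, rfl⟩
    · exact .inr ⟨v, ⟨u, hu, rfl⟩, hw⟩
    · exact .inl ⟨c, hu, w, hw, rfl⟩
  · rintro (⟨c, hc, w, hw, rfl⟩ | ⟨v, ⟨u, hu, rfl⟩, hv⟩)
    · exact ⟨x ++ c, hc, w, hw, List.append_assoc _ _ _⟩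
    · exact ⟨u, hu, v ++ y, hv, (List.append_assoc _ _ _).symm⟩

theorem append_mem_kstar {l : Language α} {x y : List α} (hx : x ∈ l∗) (hy : y ∈ l∗) :
    x ++ y ∈ l∗ := by
  simpa only [kstar_mul_kstar] using append_mem_mul hx hy

/-- `v` is the part of `x` lying in the factor of `x ++ y` that straddles the end of `x`. -/
theorem exists_mem_suffixesAfter_of_append_mem_kstar {l : Language α} {x y : List α}
    (hx : x ≠ []) (h : x ++ y ∈ l∗) :
    ∃ v ∈ l∗.suffixesAfter x, y ∈ l.leftQuotient v * l∗ := by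
  obtain ⟨S, hS, hSl⟩ := mem_kstar.1 h
  clear h
  induction S generalizing x with
  | nil => simp_all
  | cons c S ih =>
    have hc : c ∈ l := hSl c List.mem_cons_self
    have hSl' : ∀ z ∈ S, z ∈ l := fun z hz => hSl z (List.mem_cons_of_mem c hz)
    rw [List.flatten_cons] at hS
    rcases List.append_eq_append_iff.1 hS.symm with ⟨r, rfl, hr⟩ | ⟨r, rfl, rfl⟩
    · obtain rfl | hr' := eq_or_ne r []
      · rw [List.append_nil] at hx ⊢
        refine ⟨c, ⟨[], nil_mem_kstar l, rfl⟩, ?_⟩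
        simpa [hr] using append_mem_mul (show [] ∈ l.leftQuotient c by simpa using hc)
          (join_mem_kstar hSl')
      · obtain ⟨v, ⟨w, hw, rfl⟩, hy⟩ := ih hr' hr.symm hSl'
        exact ⟨v, ⟨c ++ w, append_mem_kstar (le_kstar (a := l) hc) hw, by simp⟩, hy⟩
    · exact ⟨x, ⟨[], nil_mem_kstar l, rfl⟩,
        append_mem_mul (show r ∈ l.leftQuotient x from hc) (join_mem_kstar hSl')⟩

open scoped Classical in
theorem leftQuotient_kstar (l : Language α) (x : List α) :
    (l∗).leftQuotient x =
      (if x ∈ l∗ then l∗ else 0) + ⨆ v ∈ l∗.suffixesAfter x, l.leftQuotient v * l∗ := by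
  ext y
  simp only [mem_leftQuotient, mem_add, mem_iSup]
  constructor
  · intro h
    obtain rfl | hx := eq_or_ne x []
    · exact .inl (by simpa [nil_mem_kstar] using h)
    · obtain ⟨v, hv, hy⟩ := exists_mem_suffixesAfter_of_append_mem_kstar hx h
      exact .inr ⟨v, hv, hy⟩
  · rintro (h | ⟨v, ⟨w, hw, rfl⟩, hy⟩)
    · split_ifs at h with hx
      · exact append_mem_kstar hx h
      · exact absurd h (notMem_zero y)
    · obtain ⟨y', hy', y'', hy'', rfl⟩ := mem_mul.1 hy
      have hle : l∗ * l * l∗ ≤ l∗ :=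
        (mul_le_mul_left kstar_mul_le_kstar _).trans (kstar_mul_kstar l).le
      have hmem : w ++ (v ++ y') ++ y'' ∈ l∗ := hle (append_mem_mul (append_mem_mul hw hy') hy'')
      simpa only [List.append_assoc] using hmem

theorem IsRegular.mul {l m : Language α} (hl : l.IsRegular) (hm : m.IsRegular) :
    (l * m).IsRegular :=
  .of_leftQuotient_eq_comp (fun x => (l.leftQuotient x, m.leftQuotient '' l.suffixesAfter x))
    (fun p => p.1 * m + ⨆ B ∈ p.2, B)
    ((hl.finite_range_leftQuotient.prod hm.finite_range_leftQuotient.finite_subsets).subset <| by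
      rintro _ ⟨x, rfl⟩
      exact ⟨mem_range_self x, image_subset_range _ _⟩)
    (fun x => by rw [leftQuotient_mul, iSup_image])

open scoped Classical in
theorem IsRegular.kstar {l : Language α} (hl : l.IsRegular) : (l∗).IsRegular :=
  .of_leftQuotient_eq_comp (fun x => (x ∈ l∗, l.leftQuotient '' l∗.suffixesAfter x))
    (fun p => (if p.1 then l∗ else 0) + ⨆ A ∈ p.2, A * l∗)
    ((finite_univ.prod hl.finite_range_leftQuotient.finite_subsets).subset <| by
      rintro _ ⟨x, rfl⟩
      exact ⟨mem_univ _, image_subset_range _ _⟩)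
    (fun x => by rw [leftQuotient_kstar, iSup_image])

end Language

theorem stmt_16_general {T : Type*} (α β γ L : Language T)
    (hα : α.IsRegular) (hβ : β.IsRegular) (hγ : γ.IsRegular)
    (hL : L = α * L + L * β + γ)
    (hmin : ∀ z : Language T, z = α * z + z * β + γ → L ≤ z) :
    L.IsRegular := by
  rw [eq_kstar_mul_mul_kstar_of_minimal hL hmin]
  exact (hα.kstar.mul hγ).mul hβ.kstar

theorem stmt_16 {T : Type*} [Fintype T] (α β γ L : Language T)
    (hα : α.IsRegular) (hβ : β.IsRegular) (hγ : γ.IsRegular)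
    (hαε : [] ∉ α) (hβε : [] ∉ β)
    (hL : L = α * L + L * β + γ)
    (hmin : ∀ z : Language T, z = α * z + z * β + γ → L ≤ z) :
    L.IsRegular :=
  stmt_16_general α β γ L hα hβ hγ hL hmin
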